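/- The Pruned Closed Form is componentwise at most the n-fold iterate: (g_{∅,1}(0⃗), …, g_{∅,n}(0⃗)) ≤ f⃗ⁿ(0⃗) in the componentwise order on 𝔹ⁿ. -/

import Mathlib

/-- The pruned family of functions `g_{S,i}`: `g_{S,i} = f_i ∘ (g_{S∪{i},1},…,g_{S∪{i},n})`
if `i ∉ S`, and the constant-`false` (constant-0) function if `i ∈ S`. -/
def prunedG (n : ℕ) (f : Fin n → (Fin n → Bool) → Bool) :
    Finset (Fin n) → Fin n → (Fin n → Bool) → Bool
  | S, i => fun x =>
    if h : i ∈ S then false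
    else f i (fun j => prunedG n f (insert i S) j x)
termination_by S _ => n - S.card
decreasing_by
  have h1 : (insert i S).card = S.card + 1 := Finset.card_insert_of_notMem h
  have h2 : (insert i S).card ≤ n := by
    simpa using Finset.card_le_univ (insert i S)
  omega

/-! Unfolding `g_{S,i}` costs one application of `f⃗` and enlarges `S` by one, so by induction
on the recursion `g_{S,i}(x) ≤ (f⃗^{n-|S|}(0⃗))_i` by monotonicity of the `f_i`; the case `S = ∅`
is the claim. -/

theorem Finset.card_univ_sub_card_insert_add_one {α : Type*} [Fintype α] [DecidableEq α]
    {S : Finset α} {a : α} (ha : a ∉ S) :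
    Fintype.card α - S.card = Fintype.card α - (insert a S).card + 1 := by
  have hcard := Finset.card_insert_of_notMem ha
  have hle := Finset.card_le_univ (insert a S)
  omega

section prunedG

variable {n : ℕ} {f : Fin n → (Fin n → Bool) → Bool}

theorem prunedG_of_mem {S : Finset (Fin n)} {i : Fin n} (hi : i ∈ S) (x : Fin n → Bool) :
    prunedG n f S i x = false := by
  rw [prunedG]
  exact dif_pos hi

theorem prunedG_of_notMem {S : Finset (Fin n)} {i : Fin n} (hi : i ∉ S) (x : Fin n → Bool) :
    prunedG n f S i x = f i (fun j => prunedG n f (insert i S) j x) := by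
  rw [prunedG]
  exact dif_neg hi

theorem prunedG_le_iterate (hf : ∀ i, Monotone (f i)) (S : Finset (Fin n)) (i : Fin n)
    (x : Fin n → Bool) :
    prunedG n f S i x ≤ ((fun y j => f j y)^[n - S.card] (fun _ => false)) i := by
  induction S, i using prunedG.induct with
  | case1 S i ih =>
    by_cases hi : i ∈ S
    · rw [prunedG_of_mem hi]
      exact Bool.false_le _
    · have hk := Finset.card_univ_sub_card_insert_add_one hi
      rw [Fintype.card_fin] at hk
      rw [prunedG_of_notMem hi, hk, Function.iterate_succ_apply']
      exact hf i fun j => ih hi j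

end prunedG

theorem prunedClosedForm_le_iterate_general {n : ℕ}
    (f : Fin n → (Fin n → Bool) → Bool) (hf : ∀ i, Monotone (f i)) :
    (fun i => prunedG n f ∅ i (fun _ => false)) ≤
      (fun x i => f i x)^[n] (fun _ => false) := fun i => by
  simpa using prunedG_le_iterate hf ∅ i (fun _ => false)

/-- Corollary: the Pruned Closed Form is componentwise at most the `n`-fold iterate:
`g⃗_∅(0⃗) ≤ f⃗ⁿ(0⃗)`. -/
theorem prunedClosedForm_le_iterate {n : ℕ} (hn : 1 ≤ n)
    (f : Fin n → (Fin n → Bool) → Bool) (hf : ∀ i, Monotone (f i)) :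
    (fun i => prunedG n f ∅ i (fun _ => false)) ≤
      (fun x i => f i x)^[n] (fun _ => false) :=
  prunedClosedForm_le_iterate_general f hf
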